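/- Suppose an n × n matrix A with nonnegative real entries has a Sinkhorn decomposition A = D S E, where S is doubly stochastic and D, E are diagonal matrices with strictly positive diagonal entries. Then sm(A) = (1/n)·gm(D)·gm(E) = (1/n)·pm(A)/pm(S), where gm(D) denotes the geometric mean of the diagonal entries of D. Moreover, the infimum in the definition of sm(A) is attained at the vectors x and y whose entries form the diagonals of D⁻¹ and E⁻¹, respectively. -/

import Mathlib

open scoped BigOperators Kronecker
open Matrix

/-- The permanent of a square real matrix. -/
noncomputable def perm {ι : Type*} [Fintype ι] [DecidableEq ι] (A : Matrix ι ι ℝ) : ℝ :=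
  ∑ σ : Equiv.Perm ι, ∏ i, A i (σ i)

/-- The permanental mean `pm A = (per A / n!) ^ (1/n)`. -/
noncomputable def pm {ι : Type*} [Fintype ι] [DecidableEq ι] (A : Matrix ι ι ℝ) : ℝ :=
  (perm A / (Nat.factorial (Fintype.card ι) : ℝ)) ^ ((Fintype.card ι : ℝ)⁻¹)

/-- The geometric mean of the entries of a vector. -/
noncomputable def gmVec {ι : Type*} [Fintype ι] (v : ι → ℝ) : ℝ :=
  (∏ i, v i) ^ ((Fintype.card ι : ℝ)⁻¹)

/-- The set of values whose infimum defines the scaling mean. -/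
noncomputable def smSet {ι κ : Type*} [Fintype ι] [Fintype κ] (A : Matrix ι κ ℝ) : Set ℝ :=
  {r : ℝ | ∃ x : ι → ℝ, ∃ y : κ → ℝ, (∀ i, 0 < x i) ∧ (∀ j, 0 < y j) ∧
    r = (∑ i, ∑ j, x i * A i j * y j) / (gmVec x * gmVec y)}

/-- The scaling mean `sm A = (1/(mn)) · inf over positive vectors x, y of xᵀAy/(gm x · gm y)`. -/
noncomputable def sm {ι κ : Type*} [Fintype ι] [Fintype κ] (A : Matrix ι κ ℝ) : ℝ :=
  ((Fintype.card ι : ℝ) * (Fintype.card κ : ℝ))⁻¹ * sInf (smSet A)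

/-!
For `x, y > 0` put `u = x ∘ d` and `v = y ∘ e`. Then `xᵀ A y = ∑ᵢⱼ uᵢ Sᵢⱼ vⱼ`, and weighted AM-GM
with the weights `Sᵢⱼ / n` (which sum to `1`) bounds it below by `n · ∏ᵢⱼ (uᵢ vⱼ)^(Sᵢⱼ/n)`; since
the row and column sums of `S` are `1`, that product is `gm u · gm v = gm x gm d · gm y gm e`.
Hence `xᵀ A y / (gm x gm y) ≥ n gm d gm e`, with equality at `x = d⁻¹, y = e⁻¹`.
Finally `per A = (∏ d)(∏ e) per S`, and `per S > 0` by Birkhoff's theorem, so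
`pm A / pm S = gm d gm e`.
-/

open Finset

section GeometricMean

variable {ι : Type*} [Fintype ι]

lemma gmVec_pos {v : ι → ℝ} (hv : ∀ i, 0 < v i) : 0 < gmVec v :=
  Real.rpow_pos_of_pos (prod_pos fun i _ => hv i) _

lemma gmVec_mul {v w : ι → ℝ} (hv : ∀ i, 0 ≤ v i) (hw : ∀ i, 0 ≤ w i) :
    gmVec (fun i => v i * w i) = gmVec v * gmVec w := by
  rw [gmVec, prod_mul_distrib,
    Real.mul_rpow (prod_nonneg fun i _ => hv i) (prod_nonneg fun i _ => hw i)]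
  rfl

lemma gmVec_inv {v : ι → ℝ} (hv : ∀ i, 0 ≤ v i) :
    gmVec (fun i => (v i)⁻¹) = (gmVec v)⁻¹ := by
  rw [gmVec, prod_inv_distrib, Real.inv_rpow (prod_nonneg fun i _ => hv i)]
  rfl

end GeometricMean

section DoublyStochastic

variable {ι : Type*} [Fintype ι] [DecidableEq ι] {S : Matrix ι ι ℝ}

lemma prod_prod_rpow_div_card_eq_gmVec_mul_gmVec (hS : S ∈ doublyStochastic ℝ ι)
    {u v : ι → ℝ} (hu : ∀ i, 0 ≤ u i) (hv : ∀ j, 0 ≤ v j) :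
    ∏ i, ∏ j, (u i * v j) ^ (S i j / Fintype.card ι) = gmVec u * gmVec v := by
  have hexp : ∀ i j, 0 ≤ S i j / Fintype.card ι := fun i j =>
    div_nonneg (nonneg_of_mem_doublyStochastic hS) (Nat.cast_nonneg _)
  have hrow : ∀ i, ∏ j, u i ^ (S i j / Fintype.card ι) = u i ^ (Fintype.card ι : ℝ)⁻¹ := by
    intro i
    rw [← Real.rpow_sum_of_nonneg (hu i) fun j _ => hexp i j, ← sum_div,
      sum_row_of_mem_doublyStochastic hS, one_div]
  have hcol : ∀ j, ∏ i, v j ^ (S i j / Fintype.card ι) = v j ^ (Fintype.card ι : ℝ)⁻¹ := by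
    intro j
    rw [← Real.rpow_sum_of_nonneg (hv j) fun i _ => hexp i j, ← sum_div,
      sum_col_of_mem_doublyStochastic hS, one_div]
  simp_rw [Real.mul_rpow (hu _) (hv _), prod_mul_distrib, hrow]
  rw [prod_comm, gmVec, gmVec, Real.finsetProd_rpow _ _ fun i _ => hu i]
  simp_rw [hcol]
  rw [Real.finsetProd_rpow _ _ fun j _ => hv j]

lemma card_mul_gmVec_mul_gmVec_le_sum (hS : S ∈ doublyStochastic ℝ ι)
    {u v : ι → ℝ} (hu : ∀ i, 0 ≤ u i) (hv : ∀ j, 0 ≤ v j) :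
    Fintype.card ι * (gmVec u * gmVec v) ≤ ∑ i, ∑ j, u i * S i j * v j := by
  rcases isEmpty_or_nonempty ι with _ | _
  · simp
  have hn : (Fintype.card ι : ℝ) ≠ 0 := Nat.cast_ne_zero.2 Fintype.card_ne_zero
  have hweights : ∑ p : ι × ι, S p.1 p.2 / Fintype.card ι = 1 := by
    simp [← sum_div, Fintype.sum_prod_type, sum_row_of_mem_doublyStochastic hS, hn]
  have amgm := Real.geom_mean_le_arith_mean_weighted univ
    (fun p : ι × ι => S p.1 p.2 / Fintype.card ι) (fun p => u p.1 * v p.2)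
    (fun p _ => div_nonneg (nonneg_of_mem_doublyStochastic hS) (Nat.cast_nonneg _)) hweights
    (fun p _ => mul_nonneg (hu p.1) (hv p.2))
  rw [Fintype.prod_prod_type, prod_prod_rpow_div_card_eq_gmVec_mul_gmVec hS hu hv,
    Fintype.sum_prod_type] at amgm
  calc (Fintype.card ι : ℝ) * (gmVec u * gmVec v)
      ≤ Fintype.card ι * ∑ i, ∑ j, S i j / Fintype.card ι * (u i * v j) := by gcongr
    _ = ∑ i, ∑ j, u i * S i j * v j := by
      simp_rw [mul_sum]
      refine sum_congr rfl fun i _ => sum_congr rfl fun j _ => ?_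
      field_simp

lemma exists_perm_forall_pos_of_mem_doublyStochastic (hS : S ∈ doublyStochastic ℝ ι) :
    ∃ σ : Equiv.Perm ι, ∀ i, 0 < S i (σ i) := by
  obtain ⟨w, hw0, hw1, hwS⟩ := exists_eq_sum_perm_of_mem_doublyStochastic hS
  obtain ⟨σ, -, hσ⟩ := exists_lt_of_sum_lt (s := univ) (f := 0) (g := w) (by simp [hw1])
  refine ⟨σ, fun i => hσ.trans_le ?_⟩
  have hterm : ∀ τ, 0 ≤ w τ * τ.permMatrix ℝ i (σ i) := fun τ =>
    mul_nonneg (hw0 τ) (nonneg_of_mem_doublyStochastic permMatrix_mem_doublyStochastic)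
  calc w σ = w σ * σ.permMatrix ℝ i (σ i) := by simp [Equiv.toPEquiv_apply]
    _ ≤ ∑ τ, w τ * τ.permMatrix ℝ i (σ i) := single_le_sum (fun τ _ => hterm τ) (mem_univ σ)
    _ = S i (σ i) := by simp [← hwS, Matrix.sum_apply]

lemma perm_pos_of_mem_doublyStochastic (hS : S ∈ doublyStochastic ℝ ι) : 0 < perm S := by
  obtain ⟨σ, hσ⟩ := exists_perm_forall_pos_of_mem_doublyStochastic hS
  exact (prod_pos fun i _ => hσ i).trans_le <|
    single_le_sum (f := fun τ : Equiv.Perm ι => ∏ i, S i (τ i))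
      (fun τ _ => prod_nonneg fun i _ => nonneg_of_mem_doublyStochastic hS) (mem_univ σ)

lemma pm_pos_of_mem_doublyStochastic (hS : S ∈ doublyStochastic ℝ ι) : 0 < pm S :=
  Real.rpow_pos_of_pos (div_pos (perm_pos_of_mem_doublyStochastic hS)
    (Nat.cast_pos.2 (Nat.factorial_pos _))) _

end DoublyStochastic

section DiagonalScaling

variable {ι : Type*} [Fintype ι] [DecidableEq ι] {S : Matrix ι ι ℝ} {d e : ι → ℝ}

lemma perm_diagonal_mul_mul_diagonal :
    perm (diagonal d * S * diagonal e) = (∏ i, d i) * (∏ i, e i) * perm S := by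
  simp_rw [perm, mul_sum, mul_diagonal, diagonal_mul, prod_mul_distrib, Equiv.prod_comp]
  exact sum_congr rfl fun σ _ => by ring

lemma pm_diagonal_mul_mul_diagonal (hd : ∀ i, 0 ≤ d i) (he : ∀ i, 0 ≤ e i) (hS : 0 ≤ perm S) :
    pm (diagonal d * S * diagonal e) = gmVec d * gmVec e * pm S := by
  have hfac : (0 : ℝ) ≤ (Fintype.card ι).factorial := Nat.cast_nonneg _
  have hd' := prod_nonneg fun i (_ : i ∈ univ) => hd i
  have he' := prod_nonneg fun i (_ : i ∈ univ) => he i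
  rw [pm, perm_diagonal_mul_mul_diagonal, mul_div_assoc,
    Real.mul_rpow (mul_nonneg hd' he') (div_nonneg hS hfac), Real.mul_rpow hd' he']
  rfl

lemma sum_inv_mul_diagonal_mul_mul_diagonal_mul_inv (hS : S ∈ doublyStochastic ℝ ι)
    (hd : ∀ i, d i ≠ 0) (he : ∀ i, e i ≠ 0) :
    ∑ i, ∑ j, (d i)⁻¹ * (diagonal d * S * diagonal e) i j * (e j)⁻¹ = Fintype.card ι := by
  have hentry : ∀ i j, (d i)⁻¹ * (diagonal d * S * diagonal e) i j * (e j)⁻¹ = S i j := by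
    intro i j
    simp only [mul_diagonal, diagonal_mul]
    field_simp [hd i, he j]
  simp_rw [hentry, sum_row_of_mem_doublyStochastic hS]
  simp

lemma sum_inv_mul_mul_inv_div_gmVec_inv (hS : S ∈ doublyStochastic ℝ ι)
    (hd : ∀ i, 0 < d i) (he : ∀ i, 0 < e i) :
    (∑ i, ∑ j, (d i)⁻¹ * (diagonal d * S * diagonal e) i j * (e j)⁻¹) /
        (gmVec (fun i => (d i)⁻¹) * gmVec (fun j => (e j)⁻¹)) =
      Fintype.card ι * (gmVec d * gmVec e) := by
  rw [sum_inv_mul_diagonal_mul_mul_diagonal_mul_inv hS (fun i => (hd i).ne') fun j => (he j).ne',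
    gmVec_inv fun i => (hd i).le, gmVec_inv fun j => (he j).le, ← mul_inv, div_inv_eq_mul]

lemma isLeast_smSet_diagonal_mul_mul_diagonal (hS : S ∈ doublyStochastic ℝ ι)
    (hd : ∀ i, 0 < d i) (he : ∀ i, 0 < e i) :
    IsLeast (smSet (diagonal d * S * diagonal e)) (Fintype.card ι * (gmVec d * gmVec e)) := by
  refine ⟨⟨_, _, fun i => inv_pos.2 (hd i), fun j => inv_pos.2 (he j),
    (sum_inv_mul_mul_inv_div_gmVec_inv hS hd he).symm⟩, ?_⟩
  rintro r ⟨x, y, hx, hy, rfl⟩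
  have hxd : ∀ i, 0 ≤ x i * d i := fun i => (mul_pos (hx i) (hd i)).le
  have hye : ∀ j, 0 ≤ y j * e j := fun j => (mul_pos (hy j) (he j)).le
  have hbound := card_mul_gmVec_mul_gmVec_le_sum hS hxd hye
  rw [gmVec_mul (fun i => (hx i).le) fun i => (hd i).le,
    gmVec_mul (fun j => (hy j).le) fun j => (he j).le] at hbound
  rw [le_div_iff₀ (mul_pos (gmVec_pos hx) (gmVec_pos hy))]
  calc (Fintype.card ι : ℝ) * (gmVec d * gmVec e) * (gmVec x * gmVec y)
      = Fintype.card ι * (gmVec x * gmVec d * (gmVec y * gmVec e)) := by ring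
    _ ≤ ∑ i, ∑ j, x i * d i * S i j * (y j * e j) := hbound
    _ = ∑ i, ∑ j, x i * (diagonal d * S * diagonal e) i j * y j := by
      simp only [mul_diagonal, diagonal_mul]
      exact sum_congr rfl fun i _ => sum_congr rfl fun j _ => by ring

end DiagonalScaling

/-- If `A = D S E` is a Sinkhorn decomposition (with `S` doubly stochastic and
`D = diag d`, `E = diag e` having positive diagonals), then
`sm A = (1/n)·gm(D)·gm(E) = (1/n)·pm(A)/pm(S)`, and the infimum defining `sm A`
is attained at the vectors formed by the diagonals of `D⁻¹` and `E⁻¹`. -/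
theorem stmt_8 {n : ℕ} (A S : Matrix (Fin n) (Fin n) ℝ) (d e : Fin n → ℝ)
    (hd : ∀ i, 0 < d i) (he : ∀ i, 0 < e i)
    (hS0 : ∀ i j, 0 ≤ S i j)
    (hrow : ∀ i, ∑ j, S i j = 1) (hcol : ∀ j, ∑ i, S i j = 1)
    (hA : A = Matrix.diagonal d * S * Matrix.diagonal e) :
    sm A = (n : ℝ)⁻¹ * (gmVec d * gmVec e) ∧
    sm A = (n : ℝ)⁻¹ * (pm A / pm S) ∧
    sInf (smSet A) =
      (∑ i, ∑ j, (d i)⁻¹ * A i j * (e j)⁻¹) /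
        (gmVec (fun i => (d i)⁻¹) * gmVec (fun j => (e j)⁻¹)) := by
  subst hA
  have hS : S ∈ doublyStochastic ℝ (Fin n) := mem_doublyStochastic_iff_sum.2 ⟨hS0, hrow, hcol⟩
  have hinf := (isLeast_smSet_diagonal_mul_mul_diagonal hS hd he).csInf_eq
  have hpm := pm_diagonal_mul_mul_diagonal (fun i => (hd i).le) (fun j => (he j).le)
    (perm_pos_of_mem_doublyStochastic hS).le
  have hsm : sm (diagonal d * S * diagonal e) = (n : ℝ)⁻¹ * (gmVec d * gmVec e) := by
    rw [sm, hinf, Fintype.card_fin]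
    rcases eq_or_ne (n : ℝ) 0 with hn | hn
    · simp [hn]
    · field_simp
  refine ⟨hsm, ?_, ?_⟩
  · rw [hsm, hpm, mul_div_cancel_right₀ _ (pm_pos_of_mem_doublyStochastic hS).ne']
  · rw [hinf, sum_inv_mul_mul_inv_div_gmVec_inv hS hd he]
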